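/- arXiv:2005.07568 — 2 statements merged into one kernel-verified Lean document; each statement's English description precedes it below -/
import Mathlib

section
/- If two cDGs containing all loops are Markov equivalent, then they have the same directed edges and the same maximal virtual collider tripaths. -/
universe u

/-- A directed correlation graph (cDG): directed edges (loops allowed) and
blunt edges (symmetric, no loops). -/
structure CDG (V : Type u) where
  dir : V → V → Prop
  blunt : V → V → Prop
  blunt_symm : ∀ a b, blunt a b → blunt b a
  blunt_irrefl : ∀ a, ¬ blunt a a

namespace CDG

variable {V : Type u}

/-- `anc D a b` : `a` is an ancestor of `b` (directed path from `a` to `b`;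
every node is its own ancestor). -/
def anc (D : CDG V) (a b : V) : Prop := Relation.ReflTransGen D.dir a b

/-- `an(C)`: the set of ancestors of `C`. -/
def ancSet (D : CDG V) (C : Set V) : Set V := {a | ∃ c ∈ C, D.anc a c}

/-- An edge instance between `a` and `b`, with its orientation. -/
inductive Edge (D : CDG V) : V → V → Type u
  | fwd {a b : V} : D.dir a b → Edge D a b
  | bwd {a b : V} : D.dir b a → Edge D a b
  | bl  {a b : V} : D.blunt a b → Edge D a b

/-- The edge has a neck (head or stump) at its left endpoint. -/
def Edge.neckLeft {D : CDG V} {a b : V} : D.Edge a b → Prop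
  | .fwd _ => False
  | .bwd _ => True
  | .bl _ => True

/-- The edge has a neck (head or stump) at its right endpoint. -/
def Edge.neckRight {D : CDG V} {a b : V} : D.Edge a b → Prop
  | .fwd _ => True
  | .bwd _ => False
  | .bl _ => True

/-- The edge has a head (arrowhead) at its right endpoint. -/
def Edge.headRight {D : CDG V} {a b : V} : D.Edge a b → Prop
  | .fwd _ => True
  | _ => False

/-- The edge is a blunt edge. -/
def Edge.isBlunt {D : CDG V} {a b : V} : D.Edge a b → Prop
  | .bl _ => True
  | _ => False

/-- A walk from `a` to `b` in `D`. -/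
inductive Walk (D : CDG V) : V → V → Type u
  | nil (a : V) : Walk D a a
  | cons {a m c : V} : D.Edge a m → Walk D m c → Walk D a c

namespace Walk

variable {D : CDG V}

def length : ∀ {a b : V}, D.Walk a b → ℕ
  | _, _, .nil _ => 0
  | _, _, .cons _ w => w.length + 1

def support : ∀ {a b : V}, D.Walk a b → List V
  | a, _, .nil _ => [a]
  | a, _, .cons _ w => a :: w.support

/-- The list of nonendpoint (internal) node instances of a walk. -/
def internal : ∀ {a b : V}, D.Walk a b → List V
  | _, _, .nil _ => []
  | _, _, .cons _ (.nil _) => []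
  | _, _, .cons (m := m) _ w => m :: w.internal

/-- The final edge of the walk has a head at the terminal node. -/
def lastHead : ∀ {a b : V}, D.Walk a b → Prop
  | _, _, .nil _ => False
  | _, _, .cons e (.nil _) => e.headRight
  | _, _, .cons _ w => w.lastHead

/-- Every collider on the walk is in `an(C)` and no noncollider is in `C`. -/
def mOpen (C : Set V) : ∀ {a b : V}, D.Walk a b → Prop
  | _, _, .nil _ => True
  | _, _, .cons _ (.nil _) => True
  | _, _, .cons (m := m) e₁ (.cons e₂ w) =>
      ((e₁.neckRight ∧ e₂.neckLeft) → m ∈ D.ancSet C) ∧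
      (¬ (e₁.neckRight ∧ e₂.neckLeft) → m ∉ C) ∧
      mOpen C (Walk.cons e₂ w)

/-- Every nonendpoint node of the walk is a collider. -/
def allColliders : ∀ {a b : V}, D.Walk a b → Prop
  | _, _, .nil _ => True
  | _, _, .cons _ (.nil _) => True
  | _, _, .cons e₁ (.cons e₂ w) =>
      e₁.neckRight ∧ e₂.neckLeft ∧ allColliders (Walk.cons e₂ w)

/-- Every edge of the walk is blunt. -/
def allBlunt : ∀ {a b : V}, D.Walk a b → Prop
  | _, _, .nil _ => True
  | _, _, .cons e w => e.isBlunt ∧ w.allBlunt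

end Walk

/-- There is a μ-connecting walk from `a` to `b` given `C`. -/
def muConn (D : CDG V) (C : Set V) (a b : V) : Prop :=
  a ∉ C ∧ ∃ w : D.Walk a b, w.mOpen C ∧ w.lastHead

/-- `B` is μ-separated from `A` given `C`. -/
def muSep (D : CDG V) (A B C : Set V) : Prop :=
  ∀ a ∈ A, ∀ b ∈ B, ¬ D.muConn C a b

/-- The independence model of `D`: all μ-separation triples. -/
def indep (D : CDG V) : Set (Set V × Set V × Set V) :=
  {p | D.muSep p.1 p.2.1 p.2.2}

/-- A (nontrivial) collider path. -/
def IsColliderPath {D : CDG V} {a b : V} (w : D.Walk a b) : Prop :=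
  0 < w.length ∧ w.support.Nodup ∧ w.allColliders

/-- `a` and `b` are collider connected: some nontrivial walk between them has
every nonendpoint node a collider. -/
def colliderConn (D : CDG V) (a b : V) : Prop :=
  ∃ w : D.Walk a b, 0 < w.length ∧ w.allColliders

/-- A weak inducing path from `a` to `b`: a collider path whose nonendpoint
nodes are all ancestors of `a` or of `b`. -/
def WeakInducing (D : CDG V) (a b : V) : Prop :=
  ∃ w : D.Walk a b, IsColliderPath w ∧ ∀ m ∈ w.internal, D.anc m a ∨ D.anc m b

/-- A weak inducing path between `a` and `b` (in either direction). -/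
def WeakInducingBetween (D : CDG V) (a b : V) : Prop :=
  D.WeakInducing a b ∨ D.WeakInducing b a

end CDG

/-- The strongly connected component of `v`. -/
def CDG.scc {V : Type} (D : CDG V) (v : V) : Set V :=
  {w | D.anc v w ∧ D.anc w v}

/-- `C` is a strongly connected component of `D`. -/
def CDG.IsSCC {V : Type} (D : CDG V) (C : Set V) : Prop := ∃ v, C = D.scc v

/-- The edge relation of the condensation 𝒞(D). -/
def CDG.condEdge {V : Type} (D : CDG V) (C₁ C₂ : Set V) : Prop :=
  D.IsSCC C₁ ∧ D.IsSCC C₂ ∧ C₁ ≠ C₂ ∧ ∃ a ∈ C₁, ∃ b ∈ C₂, D.dir a b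

/-- The edge relation of the completed condensation: the condensation together
with an extra node ∅ which is a parent of every component. -/
def CDG.ccEdge {V : Type} (D : CDG V) (C₁ C₂ : Set V) : Prop :=
  D.condEdge C₁ C₂ ∨ (C₁ = ∅ ∧ D.IsSCC C₂)

/-- `(α,β,C)` is a virtual collider tripath. -/
def CDG.VCT {V : Type} (D : CDG V) (α β : V) (C : Set V) : Prop :=
  (D.IsSCC C ∨ C = ∅) ∧
  ∃ w : D.Walk α β, CDG.IsColliderPath w ∧
    ∀ m ∈ w.internal, m ∈ D.ancSet ({α, β} ∪ C)

/-- `(α,β,C)` is a maximal virtual collider tripath. -/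
def CDG.MaxVCT {V : Type} (D : CDG V) (α β : V) (C : Set V) : Prop :=
  D.VCT α β C ∧
  ¬ ∃ C' : Set V, C' ≠ C ∧ D.VCT α β C' ∧ Relation.ReflTransGen D.ccEdge C' C

/-!
Given `V \ {a}`, `a` is μ-connected to `b` exactly when `a → b`, so Markov equivalent graphs
share their directed edges, hence their ancestors, strongly connected components and completed
condensations. For `α ≠ β`, a loop at `β` turns a collider path from `α` to `β` with internal
nodes in `an(S)` into a walk μ-connecting `α` to `β` given `an(S) \ {α, β}`. Conversely, every
noncollider of such a walk is an ancestor of a collider or of an endpoint, so it lies in `an(S)`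
and must be `α` or `β`; cutting the walk there and removing cycles leaves such a collider path.
So virtual collider tripaths, and with them the maximal ones, are read off the μ-separation
model.
-/

namespace CDG

variable {V : Type*} {D : CDG V}

lemma mem_ancSet_of_mem {S : Set V} {x : V} (hx : x ∈ S) : x ∈ D.ancSet S :=
  ⟨x, hx, .refl⟩

lemma mem_ancSet_of_anc {S : Set V} {x y : V} (h : D.anc x y) (hy : y ∈ D.ancSet S) :
    x ∈ D.ancSet S :=
  let ⟨c, hc, hyc⟩ := hy
  ⟨c, hc, h.trans hyc⟩

lemma ancSet_subset_of_subset_ancSet {S T : Set V} (h : T ⊆ D.ancSet S) :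
    D.ancSet T ⊆ D.ancSet S :=
  fun _ ⟨_, hc, hxc⟩ => mem_ancSet_of_anc hxc (h hc)

namespace Edge

variable {a b : V} {e : D.Edge a b}

lemma dir_of_headRight (h : e.headRight) : D.dir a b := by
  cases e with
  | fwd h' => exact h'
  | bwd _ | bl _ => exact h.elim

lemma not_neckLeft_of_headRight (h : e.headRight) : ¬ e.neckLeft := by
  cases e with
  | fwd _ => exact id
  | bwd _ | bl _ => exact h.elim

lemma dir_of_not_neckLeft (h : ¬ e.neckLeft) : D.dir a b := by
  cases e with
  | fwd h' => exact h'
  | bwd _ | bl _ => exact absurd trivial h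

lemma neckRight_of_not_neckLeft (h : ¬ e.neckLeft) : e.neckRight := by
  cases e with
  | fwd _ => trivial
  | bwd _ | bl _ => exact absurd trivial h

lemma dir_of_not_neckRight (h : ¬ e.neckRight) : D.dir b a := by
  cases e with
  | bwd h' => exact h'
  | fwd _ | bl _ => exact absurd trivial h

end Edge

namespace Walk

def firstNeckLeft : ∀ {a b : V}, D.Walk a b → Prop
  | _, _, .nil _ => True
  | _, _, .cons e _ => e.neckLeft

def concat : ∀ {a b c : V}, D.Walk a b → D.Edge b c → D.Walk a c
  | _, _, _, .nil _, e => .cons e (.nil _)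
  | _, _, _, .cons e' w, e => .cons e' (w.concat e)

def IsColliderWalkIn (T : Set V) {a b : V} (w : D.Walk a b) : Prop :=
  0 < w.length ∧ w.allColliders ∧ ∀ m ∈ w.internal, m ∈ T

variable {a m b : V}

lemma internal_cons (e : D.Edge a m) {w : D.Walk m b} (h : 0 < w.length) :
    (cons e w).internal = m :: w.internal := by
  cases w with
  | nil => simp [length] at h
  | cons => rfl

lemma allColliders_cons (e : D.Edge a m) {w : D.Walk m b} (h : 0 < w.length) :
    (cons e w).allColliders ↔ e.neckRight ∧ w.firstNeckLeft ∧ w.allColliders := by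
  cases w with
  | nil => simp [length] at h
  | cons => exact Iff.rfl

lemma support_eq : ∀ {a b : V} (w : D.Walk a b), 0 < w.length →
    w.support = a :: (w.internal ++ [b])
  | _, _, .nil _, h => by simp [length] at h
  | _, _, .cons _ (.nil _), _ => rfl
  | a, _, .cons _ (.cons e₂ w), _ => by
      change a :: (cons e₂ w).support = _
      rw [support_eq (cons e₂ w) (Nat.succ_pos _)]
      rfl

lemma support_nodup_iff {w : D.Walk a b} (h : 0 < w.length) :
    w.support.Nodup ↔ a ≠ b ∧ a ∉ w.internal ∧ b ∉ w.internal ∧ w.internal.Nodup := by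
  rw [support_eq w h]
  simp only [List.nodup_cons, List.nodup_append, List.mem_append, List.mem_singleton]
  grind

lemma lastHead_concat : ∀ {a b c : V} (w : D.Walk a b) {e : D.Edge b c},
    e.headRight → (w.concat e).lastHead
  | _, _, _, .nil _, _, he => he
  | _, _, _, .cons _ (.nil _), _, he => he
  | _, _, _, .cons _ (.cons e₂ w), _, he => lastHead_concat (cons e₂ w) he

lemma mOpen_concat {X : Set V} : ∀ {a b c : V} (w : D.Walk a b) {e : D.Edge b c},
    ¬ e.neckLeft → b ∉ X → w.mOpen X → (w.concat e).mOpen X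
  | _, _, _, .nil _, _, _, _, _ => trivial
  | _, _, _, .cons _ (.nil _), _, he, hb, _ => ⟨fun hc => absurd hc.2 he, fun _ => hb, trivial⟩
  | _, _, _, .cons _ (.cons e₂ w), _, he, hb, ho =>
      ⟨ho.1, ho.2.1, mOpen_concat (cons e₂ w) he hb ho.2.2⟩

lemma mOpen_of_allColliders {X : Set V} : ∀ {a b : V} (w : D.Walk a b),
    w.allColliders → (∀ m ∈ w.internal, m ∈ D.ancSet X) → w.mOpen X
  | _, _, .nil _, _, _ => trivial
  | _, _, .cons _ (.nil _), _, _ => trivial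
  | _, _, .cons _ (.cons e₂ w), hc, hm =>
      ⟨fun _ => hm _ List.mem_cons_self, fun hnc => absurd ⟨hc.1, hc.2.1⟩ hnc,
        mOpen_of_allColliders (cons e₂ w) hc.2.2 fun x hx => hm x (List.mem_cons_of_mem _ hx)⟩

/-- The witness is the penultimate node, a noncollider since the last edge points into `b`. -/
lemma exists_dir_not_mem_of_lastHead {X : Set V} :
    ∀ {a m b : V} (e : D.Edge a m) (w : D.Walk m b), 0 < w.length →
      (cons e w).mOpen X → (cons e w).lastHead → ∃ x ∉ X, D.dir x b
  | _, _, _, _, .nil _, h, _, _ => by simp [length] at h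
  | _, m, _, _, .cons _ (.nil _), _, ho, hl =>
      ⟨m, ho.2.1 fun hc => Edge.not_neckLeft_of_headRight hl hc.2, Edge.dir_of_headRight hl⟩
  | _, _, _, _, .cons e₂ (.cons e₃ w), _, ho, hl =>
      exists_dir_not_mem_of_lastHead e₂ (cons e₃ w) (Nat.succ_pos _) ho.2.2 hl

/-- Following the tails of an open walk from its start leads to a collider or to its end. -/
lemma anc_or_mem_ancSet_of_not_firstNeckLeft {X : Set V} :
    ∀ {a b : V} (w : D.Walk a b), w.mOpen X → ¬ w.firstNeckLeft →
      D.anc a b ∨ a ∈ D.ancSet X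
  | _, _, .nil _, _, h => absurd trivial h
  | _, _, .cons e (.nil _), _, h => .inl (.single (Edge.dir_of_not_neckLeft h))
  | _, _, .cons e₁ (.cons e₂ w), ho, h => by
      have hdir := Edge.dir_of_not_neckLeft h
      by_cases h₂ : e₂.neckLeft
      · exact .inr (mem_ancSet_of_anc (.single hdir)
          (ho.1 ⟨Edge.neckRight_of_not_neckLeft h, h₂⟩))
      · rcases anc_or_mem_ancSet_of_not_firstNeckLeft (cons e₂ w) ho.2.2 h₂ with hm | hm
        · exact .inl (.head hdir hm)
        · exact .inr (mem_ancSet_of_anc (.single hdir) hm)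

lemma mem_ancSet_of_mOpen_cons_cons {X : Set V} {c : V} (e₁ : D.Edge a m) (e₂ : D.Edge m c)
    (w : D.Walk c b) (ho : (cons e₁ (cons e₂ w)).mOpen X) : m ∈ D.ancSet ({a, b} ∪ X) := by
  have hX : D.ancSet X ⊆ D.ancSet ({a, b} ∪ X) :=
    ancSet_subset_of_subset_ancSet fun x hx => mem_ancSet_of_mem (.inr hx)
  by_cases h₁ : e₁.neckRight
  · by_cases h₂ : e₂.neckLeft
    · exact hX (ho.1 ⟨h₁, h₂⟩)
    · rcases anc_or_mem_ancSet_of_not_firstNeckLeft (cons e₂ w) ho.2.2 h₂ with hm | hm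
      · exact ⟨b, .inl (.inr rfl), hm⟩
      · exact hX hm
  · exact ⟨a, .inl (.inl rfl), .single (Edge.dir_of_not_neckRight h₁)⟩

/-- Cutting an open walk to `β` at its first internal `α` or `β` leaves only colliders. -/
lemma exists_colliderWalkIn_of_mOpen {α β : V} {S : Set V} (hα : α ∈ D.ancSet S)
    (hβ : β ∈ D.ancSet S) : ∀ {a : V} (w : D.Walk a β), 0 < w.length →
      w.mOpen (D.ancSet S \ {α, β}) → a ∈ D.ancSet S →
      (∃ v : D.Walk a β, v.IsColliderWalkIn (D.ancSet S \ {α, β}) ∧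
        (w.firstNeckLeft → v.firstNeckLeft)) ∨
      ∃ v : D.Walk α β, v.IsColliderWalkIn (D.ancSet S \ {α, β})
  | _, .nil _, h, _, _ => by simp [length] at h
  | _, .cons e (.nil _), _, _, _ =>
      .inl ⟨cons e (.nil _), ⟨Nat.one_pos, trivial, by simp [internal]⟩, id⟩
  | a, .cons (m := m) e₁ (.cons e₂ w), _, ho, ha => by
      by_cases hmβ : m = β
      · subst hmβ
        exact .inl ⟨cons e₁ (.nil _), ⟨Nat.one_pos, trivial, by simp [internal]⟩, id⟩
      have hmS : m ∈ D.ancSet S :=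
        ancSet_subset_of_subset_ancSet (by rintro x ((rfl | rfl) | ⟨hx, -⟩) <;> assumption)
          (mem_ancSet_of_mOpen_cons_cons e₁ e₂ w ho)
      rcases exists_colliderWalkIn_of_mOpen hα hβ (cons e₂ w) (Nat.succ_pos _) ho.2.2 hmS with
        ⟨v, hv, hfirst⟩ | hfromα
      · by_cases hmα : m = α
        · subst hmα
          exact .inr ⟨v, hv⟩
        have hmX : m ∈ D.ancSet S \ {α, β} := ⟨hmS, by rintro (rfl | rfl) <;> contradiction⟩
        have hcol : e₁.neckRight ∧ e₂.neckLeft := by_contra fun h => ho.2.1 h hmX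
        refine .inl ⟨cons e₁ v, ⟨Nat.succ_pos _, (allColliders_cons e₁ hv.1).2
          ⟨hcol.1, hfirst hcol.2, hv.2.1⟩, ?_⟩, id⟩
        rw [internal_cons e₁ hv.1]
        exact List.forall_mem_cons.2 ⟨hmX, hv.2.2⟩
      · exact .inr hfromα

lemma exists_suffix_of_mem_internal : ∀ {a b : V} (w : D.Walk a b), w.allColliders →
    ∀ {m : V}, m ∈ w.internal → ∃ u : D.Walk m b, 0 < u.length ∧ u.allColliders ∧
      u.firstNeckLeft ∧ m :: u.internal <:+ w.internal
  | _, _, .nil _, _, _, hm => absurd hm List.not_mem_nil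
  | _, _, .cons _ (.nil _), _, _, hm => absurd hm List.not_mem_nil
  | _, _, .cons _ (.cons e₂ w), hc, _, hm => by
      rcases List.mem_cons.1 hm with rfl | hm
      · exact ⟨cons e₂ w, Nat.succ_pos _, hc.2.2, hc.2.1, List.suffix_refl _⟩
      · obtain ⟨u, hu0, huc, huf, hsuf⟩ := exists_suffix_of_mem_internal (cons e₂ w) hc.2.2 hm
        exact ⟨u, hu0, huc, huf, hsuf.trans (List.suffix_cons _ _)⟩

lemma exists_internal_nodup {T : Set V} : ∀ {a b : V} (w : D.Walk a b),
    w.IsColliderWalkIn T → ∃ v : D.Walk a b, v.IsColliderWalkIn T ∧ v.internal.Nodup ∧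
      (w.firstNeckLeft → v.firstNeckLeft)
  | _, _, .nil _, hw => absurd hw.1 (lt_irrefl 0)
  | _, _, .cons e (.nil _), hw => ⟨cons e (.nil _), hw, List.nodup_nil, id⟩
  | _, b, .cons (m := m) e₁ (.cons e₂ w), ⟨_, hc, hT⟩ => by
      obtain ⟨v, hv, hnd, hfirst⟩ := exists_internal_nodup (cons e₂ w)
        ⟨Nat.succ_pos _, hc.2.2, fun x hx => hT x (List.mem_cons_of_mem _ hx)⟩
      obtain ⟨u, hu0, huc, huf, hund, huT⟩ : ∃ u : D.Walk m b, 0 < u.length ∧ u.allColliders ∧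
          u.firstNeckLeft ∧ (m :: u.internal).Nodup ∧ ∀ x ∈ u.internal, x ∈ T := by
        by_cases hm : m ∈ v.internal
        · obtain ⟨u, hu0, huc, huf, hsuf⟩ := exists_suffix_of_mem_internal v hv.2.1 hm
          exact ⟨u, hu0, huc, huf, hsuf.sublist.nodup hnd,
            fun x hx => hv.2.2 x (hsuf.subset (List.mem_cons_of_mem _ hx))⟩
        · exact ⟨v, hv.1, hv.2.1, hfirst hc.2.1, List.nodup_cons.2 ⟨hm, hnd⟩, hv.2.2⟩
      refine ⟨cons e₁ u, ⟨Nat.succ_pos _, (allColliders_cons e₁ hu0).2 ⟨hc.1, huf, huc⟩, ?_⟩,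
        ?_, id⟩ <;> rw [internal_cons e₁ hu0]
      · exact List.forall_mem_cons.2 ⟨hT m List.mem_cons_self, huT⟩
      · exact hund

end Walk

lemma isColliderPath_and_internal_iff {α β : V} (hαβ : α ≠ β) (w : D.Walk α β) (T : Set V) :
    (IsColliderPath w ∧ ∀ m ∈ w.internal, m ∈ T) ↔
      w.IsColliderWalkIn (T \ {α, β}) ∧ w.internal.Nodup := by
  constructor
  · rintro ⟨⟨h0, hnd, hc⟩, hT⟩
    rw [Walk.support_nodup_iff h0] at hnd
    refine ⟨⟨h0, hc, fun m hm => ⟨hT m hm, ?_⟩⟩, hnd.2.2.2⟩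
    rintro (rfl | rfl)
    exacts [hnd.2.1 hm, hnd.2.2.1 hm]
  · rintro ⟨⟨h0, hc, hT⟩, hnd⟩
    exact ⟨⟨h0, (Walk.support_nodup_iff h0).2 ⟨hαβ, fun h => (hT α h).2 (.inl rfl),
      fun h => (hT β h).2 (.inr rfl), hnd⟩, hc⟩, fun m hm => (hT m hm).1⟩

/-- The loop at `β` supplies the final arrowhead that a μ-connecting walk needs. -/
theorem exists_colliderPath_iff_muConn {α β : V} {S : Set V} (hloop : D.dir β β)
    (hαβ : α ≠ β) (hα : α ∈ S) (hβ : β ∈ S) :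
    (∃ w : D.Walk α β, IsColliderPath w ∧ ∀ m ∈ w.internal, m ∈ D.ancSet S) ↔
      D.muConn (D.ancSet S \ {α, β}) α β := by
  constructor
  · rintro ⟨w, hw⟩
    obtain ⟨⟨-, hc, hT⟩, -⟩ := (isColliderPath_and_internal_iff hαβ w _).1 hw
    refine ⟨by simp, w.concat (.fwd hloop), ?_, Walk.lastHead_concat w trivial⟩
    exact Walk.mOpen_concat w id (by simp)
      (Walk.mOpen_of_allColliders w hc fun m hm => mem_ancSet_of_mem (hT m hm))
  · rintro ⟨-, w, ho, hl⟩
    have h0 : 0 < w.length := by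
      cases w
      exacts [hl.elim, Nat.succ_pos _]
    have hαS := mem_ancSet_of_mem (D := D) hα
    obtain ⟨v, hv⟩ : ∃ v : D.Walk α β, v.IsColliderWalkIn (D.ancSet S \ {α, β}) :=
      (Walk.exists_colliderWalkIn_of_mOpen hαS (mem_ancSet_of_mem hβ) w h0 ho hαS).elim
        (fun ⟨v, hv, _⟩ => ⟨v, hv⟩) id
    obtain ⟨u, hu, hnd, -⟩ := Walk.exists_internal_nodup v hv
    exact ⟨u, (isColliderPath_and_internal_iff hαβ u _).2 ⟨hu, hnd⟩⟩


lemma dir_iff_muConn (a b : V) :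
    D.dir a b ↔ D.muConn (Set.univ \ {a}) a b := by
  refine ⟨fun hab => ⟨by simp, .cons (.fwd hab) (.nil b), trivial, trivial⟩, ?_⟩
  rintro ⟨-, w, ho, hl⟩
  cases w with
  | nil => exact hl.elim
  | cons e w =>
    cases w with
    | nil => exact Edge.dir_of_headRight hl
    | cons e₂ w =>
      obtain ⟨x, hx, hxb⟩ :=
        Walk.exists_dir_not_mem_of_lastHead e (.cons e₂ w) (Nat.succ_pos _) ho hl
      simp only [Set.mem_sdiff, Set.mem_univ, Set.mem_singleton_iff, true_and, not_not] at hx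
      exact hx ▸ hxb

lemma muConn_iff_of_indep_eq {D₁ D₂ : CDG V} (h : D₁.indep = D₂.indep)
    (X : Set V) (a b : V) : D₁.muConn X a b ↔ D₂.muConn X a b := by
  have hsep := congrArg ((({a}, {b}, X) : Set V × Set V × Set V) ∈ ·) h
  simp only [indep, muSep, Set.mem_ofPred_eq, Set.mem_singleton_iff, forall_eq, eq_iff_iff] at hsep
  exact not_iff_not.1 hsep

lemma dir_eq_of_indep_eq {D₁ D₂ : CDG V} (h : D₁.indep = D₂.indep) :
    D₁.dir = D₂.dir := by
  ext a b
  rw [dir_iff_muConn, dir_iff_muConn, muConn_iff_of_indep_eq h]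

section Condensation

variable {V : Type} {D D₁ D₂ : CDG V}

lemma vct_iff_muConn {α β : V} (hloop : D.dir β β) (hαβ : α ≠ β) (C : Set V) :
    D.VCT α β C ↔
      (D.IsSCC C ∨ C = ∅) ∧ D.muConn (D.ancSet ({α, β} ∪ C) \ {α, β}) α β :=
  and_congr_right' (exists_colliderPath_iff_muConn hloop hαβ (by simp) (by simp))

lemma not_vct_self (α : V) (C : Set V) : ¬ D.VCT α α C := by
  rintro ⟨-, w, ⟨h0, hnd, -⟩, -⟩
  exact ((Walk.support_nodup_iff h0).1 hnd).1 rfl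

lemma ancSet_eq_of_dir_eq (hd : D₁.dir = D₂.dir) : D₁.ancSet = D₂.ancSet := by
  unfold ancSet anc
  rw [hd]

lemma isSCC_eq_of_dir_eq (hd : D₁.dir = D₂.dir) : D₁.IsSCC = D₂.IsSCC := by
  unfold IsSCC scc anc
  rw [hd]

lemma ccEdge_eq_of_dir_eq (hd : D₁.dir = D₂.dir) : D₁.ccEdge = D₂.ccEdge := by
  unfold ccEdge condEdge
  rw [isSCC_eq_of_dir_eq hd, hd]

lemma vct_eq_of_indep_eq (h₁ : ∀ a, D₁.dir a a) (h₂ : ∀ a, D₂.dir a a)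
    (h : D₁.indep = D₂.indep) : D₁.VCT = D₂.VCT := by
  have hd := dir_eq_of_indep_eq h
  ext α β C
  by_cases hαβ : α = β
  · subst hαβ
    exact iff_of_false (not_vct_self α C) (not_vct_self α C)
  · rw [vct_iff_muConn (h₁ β) hαβ, vct_iff_muConn (h₂ β) hαβ, isSCC_eq_of_dir_eq hd,
      ancSet_eq_of_dir_eq hd, muConn_iff_of_indep_eq h]

end Condensation

end CDG

/-- Markov equivalent cDGs containing all loops have the same
directed edges and the same maximal virtual collider tripaths. -/
theorem stmt12 {V : Type} (D₁ D₂ : CDG V)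
    (h1 : ∀ a, D₁.dir a a) (h2 : ∀ a, D₂.dir a a)
    (h : D₁.indep = D₂.indep) :
    (∀ a b, D₁.dir a b ↔ D₂.dir a b) ∧
    (∀ (α β : V) (C : Set V), D₁.MaxVCT α β C ↔ D₂.MaxVCT α β C) := by
  have hdir := CDG.dir_eq_of_indep_eq h
  refine ⟨fun a b => by rw [hdir], fun α β C => ?_⟩
  rw [CDG.MaxVCT, CDG.MaxVCT, CDG.vct_eq_of_indep_eq h1 h2 h, CDG.ccEdge_eq_of_dir_eq hdir]
end

section
/- Let D, E, F be real square matrices with E and F symmetric positive semidefinite, F positive definite, (D,E) stabilizable, and (F,D) detectable. Then the Hamiltonian-type matrix M̃ = [[D, −E],[−F, −Dᵀ]] has no eigenvalue on the imaginary axis. -/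
/-! If `z` is an imaginary eigenvalue of `[[D, -E], [-F, -Dᵀ]]` with eigenvector `(v₁, v₂)`,
pairing the two block rows with `v₂` and `v₁` and adding gives `Re (v₁* F v₁ + v₂* E v₂) = 0`:
the cross terms are complex conjugates, and `z (v₂* v₁ + conj (v₂* v₁))` is imaginary.
Positivity forces `v₁ = 0` and `E v₂ = 0`, so `v₂*` is a left eigenvector of `D` for `-conj z`
that `E` annihilates, hence also one of `D + E K` for every `K`, and no `D + E K` is stable. -/

open Matrix

/-- A real square matrix is stable if all its (complex) eigenvalues have
negative real part. -/
def IsStableMatrix {n : Type} [Fintype n] [DecidableEq n]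
    (M : Matrix n n ℝ) : Prop :=
  ∀ z ∈ spectrum ℂ (M.map (algebraMap ℝ ℂ)), z.re < 0

open scoped ComplexOrder

namespace Matrix

section Field

variable {K n : Type*} [Field K] [Fintype n] [DecidableEq n] {A : Matrix n n K} {μ : K}

theorem exists_mulVec_eq_smul_of_mem_spectrum (h : μ ∈ spectrum K A) :
    ∃ v ≠ 0, A *ᵥ v = μ • v := by
  rw [← spectrum_toLin', ← Module.End.hasEigenvalue_iff_mem_spectrum] at h
  obtain ⟨v, hv⟩ := h.exists_hasEigenvector
  exact ⟨v, hv.2, by simpa using Module.End.mem_eigenspace_iff.1 hv.1⟩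

theorem mem_spectrum_of_vecMul_eq_smul {w : n → K} (hw : w ≠ 0) (h : w ᵥ* A = μ • w) :
    μ ∈ spectrum K A := by
  rw [spectrum.mem_iff, isUnit_iff_isUnit_det, isUnit_iff_ne_zero, not_not]
  refine exists_vecMul_eq_zero_iff.1 ⟨w, hw, ?_⟩
  rw [Algebra.algebraMap_eq_smul_one, vecMul_sub, h, vecMul_smul, vecMul_one, sub_self]

end Field

section RCLike

variable {𝕜 n : Type*} [RCLike 𝕜] [Fintype n]

theorem PosSemidef.map_ofReal {A : Matrix n n ℝ} (hA : A.PosSemidef) :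
    (A.map (algebraMap ℝ 𝕜)).PosSemidef := by
  classical
  obtain ⟨B, rfl⟩ : ∃ B : Matrix n n ℝ, A = Bᴴ * B := by
    open MatrixOrder in exact CStarAlgebra.nonneg_iff_eq_star_mul_self.mp hA.nonneg
  rw [Matrix.map_mul, conjTranspose_map _ (fun _ => by simp)]
  exact posSemidef_conjTranspose_mul_self _

theorem PosDef.map_ofReal [DecidableEq n] {A : Matrix n n ℝ} (hA : A.PosDef) :
    (A.map (algebraMap ℝ 𝕜)).PosDef :=
  hA.posSemidef.map_ofReal.posDef_iff_det_ne_zero.2 <| by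
    rw [← RingHom.mapMatrix_apply, ← RingHom.map_det]; simpa using hA.det_pos.ne'

variable {A P Q : Matrix n n 𝕜} {z : 𝕜} {v₁ v₂ : n → 𝕜}

theorem re_add_re_eq_zero_of_hamiltonian_eigen (hz : RCLike.re z = 0)
    (h₁ : A *ᵥ v₁ - P *ᵥ v₂ = z • v₁) (h₂ : -(Q *ᵥ v₁) - Aᴴ *ᵥ v₂ = z • v₂) :
    RCLike.re (star v₁ ⬝ᵥ Q *ᵥ v₁) + RCLike.re (star v₂ ⬝ᵥ P *ᵥ v₂) = 0 := by
  have e₁ := congrArg (star v₂ ⬝ᵥ ·) h₁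
  have e₂ := congrArg (star v₁ ⬝ᵥ ·) h₂
  simp only [dotProduct_sub, dotProduct_neg, dotProduct_smul, smul_eq_mul] at e₁ e₂
  have hc : star v₁ ⬝ᵥ Aᴴ *ᵥ v₂ = star (star v₂ ⬝ᵥ A *ᵥ v₁) := by
    rw [star_dotProduct, star_mulVec, conjTranspose_conjTranspose, ← dotProduct_mulVec]
  have hd : star v₁ ⬝ᵥ v₂ = star (star v₂ ⬝ᵥ v₁) := by rw [star_dotProduct]
  rw [hc, hd] at e₂
  simpa [hz, add_comm] using congrArg (fun x => -RCLike.re x) (congrArg₂ (· + ·) e₁ e₂)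

theorem exists_left_eigenvector_of_hamiltonian_eigenvector (hP : P.PosSemidef) (hQ : Q.PosDef)
    (hz : RCLike.re z = 0) {v : n ⊕ n → 𝕜} (hv0 : v ≠ 0)
    (hv : fromBlocks A (-P) (-Q) (-Aᴴ) *ᵥ v = z • v) :
    ∃ w ≠ 0, w ᵥ* A = (-star z) • w ∧ w ᵥ* P = 0 := by
  obtain ⟨v₁, v₂, rfl⟩ : ∃ v₁ v₂, v = Sum.elim v₁ v₂ := ⟨_, _, (Sum.elim_comp_inl_inr v).symm⟩
  rw [fromBlocks_mulVec] at hv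
  have h₁ : A *ᵥ v₁ - P *ᵥ v₂ = z • v₁ := by
    funext i; simpa [neg_mulVec, sub_eq_add_neg] using congrFun hv (Sum.inl i)
  have h₂ : -(Q *ᵥ v₁) - Aᴴ *ᵥ v₂ = z • v₂ := by
    funext i; simpa [neg_mulVec, sub_eq_add_neg] using congrFun hv (Sum.inr i)
  have hsum := re_add_re_eq_zero_of_hamiltonian_eigen hz h₁ h₂
  have hQv := RCLike.nonneg_iff.1 (hQ.posSemidef.dotProduct_mulVec_nonneg v₁)
  have hPv := RCLike.nonneg_iff.1 (hP.dotProduct_mulVec_nonneg v₂)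
  have hv₁ : v₁ = 0 := by
    by_contra h
    linarith [(RCLike.pos_iff.1 (hQ.dotProduct_mulVec_pos h)).1]
  have hPv₂ : P *ᵥ v₂ = 0 := (hP.dotProduct_mulVec_zero_iff v₂).1 <|
    RCLike.ext (by rw [map_zero]; linarith) (by rw [map_zero]; exact hPv.2)
  have hv₂ : v₂ ≠ 0 := by
    rintro rfl
    exact hv0 (by rw [hv₁, Sum.elim_zero_zero])
  rw [hv₁, mulVec_zero, neg_zero, zero_sub, neg_eq_iff_eq_neg, ← neg_smul] at h₂
  refine ⟨star v₂, star_ne_zero.2 hv₂, ?_, ?_⟩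
  · rw [← conjTranspose_conjTranspose A, ← star_mulVec, h₂, star_smul, star_neg]
  · rw [← hP.isHermitian.eq, ← star_mulVec, hPv₂, star_zero]

end RCLike

end Matrix

theorem IsStableMatrix.re_lt_zero_of_vecMul_eq_smul {n : Type} [Fintype n] [DecidableEq n]
    {D E K : Matrix n n ℝ} (h : IsStableMatrix (D + E * K)) {w : n → ℂ} {μ : ℂ} (hw : w ≠ 0)
    (hD : w ᵥ* D.map (algebraMap ℝ ℂ) = μ • w) (hE : w ᵥ* E.map (algebraMap ℝ ℂ) = 0) :
    μ.re < 0 :=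
  h μ <| mem_spectrum_of_vecMul_eq_smul hw <| by
    rw [Matrix.map_add _ (map_add _), Matrix.map_mul, vecMul_add, ← vecMul_vecMul, hD, hE,
      zero_vecMul, add_zero]

theorem stmt19_general {n : Type} [Fintype n] [DecidableEq n]
    (D E F : Matrix n n ℝ) (hE : E.PosSemidef) (hF : F.PosDef)
    (hstab : ∃ K : Matrix n n ℝ, IsStableMatrix (D + E * K)) :
    ∀ z ∈ spectrum ℂ
        ((Matrix.fromBlocks D (-E) (-F) (-Dᵀ)).map (algebraMap ℝ ℂ)),
      z.re ≠ 0 := by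
  intro z hz hre
  obtain ⟨K, hK⟩ := hstab
  have hmap : (fromBlocks D (-E) (-F) (-Dᵀ)).map (algebraMap ℝ ℂ) =
      fromBlocks (D.map (algebraMap ℝ ℂ)) (-E.map (algebraMap ℝ ℂ)) (-F.map (algebraMap ℝ ℂ))
        (-(D.map (algebraMap ℝ ℂ))ᴴ) := by
    ext (i | i) (j | j) <;> simp
  rw [hmap] at hz
  obtain ⟨v, hv0, hv⟩ := exists_mulVec_eq_smul_of_mem_spectrum hz
  obtain ⟨w, hw0, hwD, hwE⟩ :=
    exists_left_eigenvector_of_hamiltonian_eigenvector hE.map_ofReal hF.map_ofReal hre hv0 hv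
  exact (hK.re_lt_zero_of_vecMul_eq_smul hw0 hwD hwE).ne (by simp [hre])

/-- with E positive semidefinite, F positive definite, (D,E)
stabilizable and (F,D) detectable, the Hamiltonian-type matrix
[[D, −E],[−F, −Dᵀ]] has no eigenvalue on the imaginary axis. -/
theorem stmt19 {n : Type} [Fintype n] [DecidableEq n]
    (D E F : Matrix n n ℝ) (hE : E.PosSemidef) (hF : F.PosDef)
    (hstab : ∃ K : Matrix n n ℝ, IsStableMatrix (D + E * K))
    (hdet : ∃ X : Matrix n n ℝ, IsStableMatrix (X * F + D)) :
    ∀ z ∈ spectrum ℂ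
        ((Matrix.fromBlocks D (-E) (-F) (-Dᵀ)).map (algebraMap ℝ ℂ)),
      z.re ≠ 0 :=
  stmt19_general D E F hE hF hstab
end
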